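/- Let α ∈ [0,1) and let v_A be any Alice density with δ ≤ v_A ≤ Δ and ∫_0^1 v_A = 1. Then there exist a Bob value density ṽ_B (bounded above and below by positive constants, with ∫_0^1 ṽ_B = 1), constants c, C > 0, a threshold T_0, and for each horizon T a pure Bob strategy S̃_B, such that for all T ≥ T_0: (i) on every T-round trajectory consistent with S̃_B, Bob's regret is at most C·T^α; and (ii) for every pure Alice strategy S_A, Alice's Stackelberg regret on the trajectory consistent with (S_A, S̃_B) is at least c·T^{(α+1)/2}. -/

import Mathlib

open MeasureTheory

/-- Bob's choice of the left or right piece. -/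
inductive Choice
  | L
  | R
deriving DecidableEq

instance : Fintype Choice :=
  ⟨{Choice.L, Choice.R}, fun x => by cases x <;> simp⟩

/-- The cumulative valuation `V(x) = ∫_0^x v`. -/
noncomputable def cumul (v : ℝ → ℝ) (x : ℝ) : ℝ := ∫ y in (0:ℝ)..x, v y

/-- `v` is an integrable value density on `[0,1]`, bounded between `lo` and `hi`,
integrating to `1`. -/
def IsDensity (lo hi : ℝ) (v : ℝ → ℝ) : Prop :=
  IntervalIntegrable v volume 0 1 ∧
  (∀ x ∈ Set.Icc (0:ℝ) 1, lo ≤ v x ∧ v x ≤ hi) ∧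
  (∫ y in (0:ℝ)..1, v y) = 1

/-- Alice's round-`t` utility: if Bob picks `L` she gets `[a_t,1]`, else `[0,a_t]`. -/
noncomputable def uA (vA : ℝ → ℝ) (a : ℕ → ℝ) (b : ℕ → Choice) (t : ℕ) : ℝ :=
  if b t = Choice.L then 1 - cumul vA (a t) else cumul vA (a t)

/-- Bob's round-`t` utility: if he picks `L` he gets `[0,a_t]`, else `[a_t,1]`. -/
noncomputable def uB (vB : ℝ → ℝ) (a : ℕ → ℝ) (b : ℕ → Choice) (t : ℕ) : ℝ :=
  if b t = Choice.L then cumul vB (a t) else 1 - cumul vB (a t)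

/-- A pure Alice strategy: given the history `(a_1,…,a_t; b_1,…,b_t)`, produce the
next cut `a_{t+1}`. -/
def AliceStrategy : Type := ∀ t : ℕ, (Fin t → ℝ) → (Fin t → Choice) → ℝ

/-- A pure (sequential) Bob strategy: given `(a_1,…,a_{t+1}; b_1,…,b_t)`, produce the
next choice `b_{t+1}`. -/
def BobStrategy : Type := ∀ t : ℕ, (Fin (t+1) → ℝ) → (Fin t → Choice) → Choice

/-- The trajectory `(a,b)` is consistent with Alice's strategy `S` over horizon `T`. -/
def AliceConsistent (S : AliceStrategy) (a : ℕ → ℝ) (b : ℕ → Choice) (T : ℕ) : Prop :=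
  ∀ t : ℕ, t < T → a (t+1) = S t (fun i => a (i.1+1)) (fun i => b (i.1+1))

/-- The trajectory `(a,b)` is consistent with Bob's strategy `S` over horizon `T`. -/
def BobConsistent (S : BobStrategy) (a : ℕ → ℝ) (b : ℕ → Choice) (T : ℕ) : Prop :=
  ∀ t : ℕ, t < T → b (t+1) = S t (fun i => a (i.1+1)) (fun i => b (i.1+1))

/-- Alice's Stackelberg value `u_A^* = max(V_A(m_B), 1 - V_A(m_B))`. -/
noncomputable def stackValue (vA : ℝ → ℝ) (mB : ℝ) : ℝ :=
  max (cumul vA mB) (1 - cumul vA mB)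

/-- Bob's regret over horizon `T` on trajectory `(a,b)`. -/
noncomputable def bobRegret (vB : ℝ → ℝ) (a : ℕ → ℝ) (b : ℕ → Choice) (T : ℕ) : ℝ :=
  ∑ t ∈ Finset.Icc 1 T, (max (cumul vB (a t)) (1 - cumul vB (a t)) - uB vB a b t)

/-- Alice's Stackelberg regret over horizon `T` on trajectory `(a,b)`. -/
noncomputable def aliceRegret (vA : ℝ → ℝ) (mB : ℝ) (a : ℕ → ℝ) (b : ℕ → Choice)
    (T : ℕ) : ℝ :=
  ∑ t ∈ Finset.Icc 1 T, (stackValue vA mB - uA vA a b t)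

/-!
Bob's midpoint is put at `m_B = 1 - 1/(4Δ)`, where `V_A(m_B) ≥ 3/4` is bounded away from `1/2`.
Bob answers truthfully except for the first `K = ⌈T^((α+1)/2)⌉` cuts in the window
`[m_B - s, m_B)`, `s ∼ T^((α-1)/2)`, where he claims the left piece although he prefers the right.
A lie costs Bob `O(s)`, so `O(K s) = O(T^α)` in all, but costs Alice a constant. Either Alice
uses up the budget and pays that constant `K` times, or the budget lasts the whole game, and
then every round costs her at least `δ s`, since cuts less than `s` to the left of `m_B` are
answered by a lie: in both cases her regret is `Ω(T^((α+1)/2))`.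
-/

lemma sum_Icc_one_eq_sum_range (f : ℕ → ℝ) (T : ℕ) :
    ∑ t ∈ Finset.Icc 1 T, f t = ∑ i ∈ Finset.range T, f (i + 1) := by
  rw [Finset.range_eq_Ico, Finset.sum_Ico_add' f 0 T 1]
  rfl

@[simp]
lemma cumul_zero (v : ℝ → ℝ) : cumul v 0 = 0 := intervalIntegral.integral_same

namespace IsDensity

variable {lo hi : ℝ} {v : ℝ → ℝ}

lemma cumul_one (hv : IsDensity lo hi v) : cumul v 1 = 1 := hv.2.2

lemma lo_le_hi (hv : IsDensity lo hi v) : lo ≤ hi :=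
  (hv.2.1 0 ⟨le_rfl, zero_le_one⟩).1.trans (hv.2.1 0 ⟨le_rfl, zero_le_one⟩).2

lemma intervalIntegrable {x y : ℝ} (hv : IsDensity lo hi v) (hx : x ∈ Set.Icc (0 : ℝ) 1)
    (hy : y ∈ Set.Icc (0 : ℝ) 1) : IntervalIntegrable v volume x y := by
  refine hv.1.mono_set (Set.uIcc_subset_uIcc ?_ ?_) <;>
    rwa [Set.uIcc_of_le zero_le_one]

lemma cumul_sub_cumul {x y : ℝ} (hv : IsDensity lo hi v) (hx : x ∈ Set.Icc (0 : ℝ) 1)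
    (hy : y ∈ Set.Icc (0 : ℝ) 1) : cumul v y - cumul v x = ∫ t in x..y, v t :=
  intervalIntegral.integral_interval_sub_left
    (hv.intervalIntegrable (Set.left_mem_Icc.2 zero_le_one) hy)
    (hv.intervalIntegrable (Set.left_mem_Icc.2 zero_le_one) hx)

lemma mul_sub_le_cumul_sub {x y : ℝ} (hv : IsDensity lo hi v) (hx : 0 ≤ x) (hxy : x ≤ y)
    (hy : y ≤ 1) : lo * (y - x) ≤ cumul v y - cumul v x := by
  rw [hv.cumul_sub_cumul ⟨hx, hxy.trans hy⟩ ⟨hx.trans hxy, hy⟩]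
  calc lo * (y - x) = ∫ _ in x..y, lo := by simp [mul_comm]
    _ ≤ ∫ t in x..y, v t :=
      intervalIntegral.integral_mono_on hxy intervalIntegrable_const
        (hv.intervalIntegrable ⟨hx, hxy.trans hy⟩ ⟨hx.trans hxy, hy⟩)
        fun t ht => (hv.2.1 t ⟨hx.trans ht.1, ht.2.trans hy⟩).1

lemma cumul_sub_le_mul_sub {x y : ℝ} (hv : IsDensity lo hi v) (hx : 0 ≤ x) (hxy : x ≤ y)
    (hy : y ≤ 1) : cumul v y - cumul v x ≤ hi * (y - x) := by
  rw [hv.cumul_sub_cumul ⟨hx, hxy.trans hy⟩ ⟨hx.trans hxy, hy⟩]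
  calc ∫ t in x..y, v t ≤ ∫ _ in x..y, hi :=
      intervalIntegral.integral_mono_on hxy
        (hv.intervalIntegrable ⟨hx, hxy.trans hy⟩ ⟨hx.trans hxy, hy⟩) intervalIntegrable_const
        fun t ht => (hv.2.1 t ⟨hx.trans ht.1, ht.2.trans hy⟩).2
    _ = hi * (y - x) := by simp [mul_comm]

lemma one_le_hi (hv : IsDensity lo hi v) : 1 ≤ hi := by
  simpa [hv.cumul_one] using hv.cumul_sub_le_mul_sub le_rfl zero_le_one le_rfl

lemma one_sub_mul_le_cumul_one_sub {g : ℝ} (hv : IsDensity lo hi v) (hg0 : 0 ≤ g) (hg1 : g ≤ 1) :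
    1 - hi * g ≤ cumul v (1 - g) := by
  have := hv.cumul_sub_le_mul_sub (x := 1 - g) (by linarith) (by linarith) le_rfl
  rw [hv.cumul_one, sub_sub_cancel] at this
  linarith

lemma cumul_le_half {m x : ℝ} (hv : IsDensity lo hi v) (hlo : 0 ≤ lo) (hm : cumul v m = 1 / 2)
    (hx : 0 ≤ x) (hxm : x ≤ m) (hm1 : m ≤ 1) : cumul v x ≤ 1 / 2 := by
  have := hv.mul_sub_le_cumul_sub hx hxm hm1
  nlinarith

lemma half_le_cumul {m x : ℝ} (hv : IsDensity lo hi v) (hlo : 0 ≤ lo) (hm : cumul v m = 1 / 2)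
    (hm0 : 0 ≤ m) (hmx : m ≤ x) (hx : x ≤ 1) : 1 / 2 ≤ cumul v x := by
  have := hv.mul_sub_le_cumul_sub hm0 hmx hx
  nlinarith

lemma eq_of_cumul_eq {x y : ℝ} (hv : IsDensity lo hi v) (hlo : 0 < lo)
    (hx : x ∈ Set.Icc (0 : ℝ) 1) (hy : y ∈ Set.Icc (0 : ℝ) 1) (hxy : cumul v x = cumul v y) :
    x = y := by
  by_contra hne
  rcases lt_or_gt_of_ne hne with h | h
  · have := hv.mul_sub_le_cumul_sub hx.1 h.le hy.2
    nlinarith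
  · have := hv.mul_sub_le_cumul_sub hy.1 h.le hx.2
    nlinarith

end IsDensity

noncomputable def twoStep (m : ℝ) (x : ℝ) : ℝ :=
  if x ≤ m then 1 / (2 * m) else 1 / (2 * (1 - m))

section twoStep

variable {m : ℝ}

lemma integral_twoStep_left (hm : 0 < m) : ∫ x in (0 : ℝ)..m, twoStep m x = 1 / 2 := by
  rw [intervalIntegral.integral_congr (g := fun _ => 1 / (2 * m)) fun x hx => by
    rw [Set.uIcc_of_le hm.le] at hx
    simp [twoStep, hx.2]]
  rw [intervalIntegral.integral_const, smul_eq_mul, sub_zero]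
  field_simp

lemma integral_twoStep_right (hm : m < 1) : ∫ x in m..(1 : ℝ), twoStep m x = 1 / 2 := by
  rw [intervalIntegral.integral_congr_ae (g := fun _ => 1 / (2 * (1 - m)))
    (Filter.Eventually.of_forall fun x hx => by
      rw [Set.uIoc_of_le hm.le] at hx
      simp [twoStep, not_le.2 hx.1])]
  have : 1 - m ≠ 0 := by linarith
  rw [intervalIntegral.integral_const, smul_eq_mul]
  field_simp

lemma intervalIntegrable_twoStep_left (hm : 0 < m) :
    IntervalIntegrable (twoStep m) volume 0 m := by
  rw [intervalIntegrable_iff, Set.uIoc_of_le hm.le]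
  exact (integrableOn_const measure_Ioc_lt_top.ne).congr_fun
    (fun x hx => (if_pos hx.2).symm) measurableSet_Ioc

lemma intervalIntegrable_twoStep_right (hm : m < 1) :
    IntervalIntegrable (twoStep m) volume m 1 := by
  rw [intervalIntegrable_iff, Set.uIoc_of_le hm.le]
  exact (integrableOn_const measure_Ioc_lt_top.ne).congr_fun
    (fun x hx => (if_neg (not_le.2 hx.1)).symm) measurableSet_Ioc

lemma cumul_twoStep_self (hm : 0 < m) : cumul (twoStep m) m = 1 / 2 :=
  integral_twoStep_left hm

lemma isDensity_twoStep {g : ℝ} (hg : 0 < g) (hgm : g ≤ m) (hgm' : g ≤ 1 - m) :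
    IsDensity (1 / 2) (1 / (2 * g)) (twoStep m) := by
  have hm0 : 0 < m := hg.trans_le hgm
  have hm1 : m < 1 := by linarith
  have left := intervalIntegrable_twoStep_left hm0
  have right := intervalIntegrable_twoStep_right hm1
  refine ⟨left.trans right, fun x _ => ?_, ?_⟩
  · unfold twoStep
    split_ifs
    · exact ⟨one_div_le_one_div_of_le (by positivity) (by linarith),
        one_div_le_one_div_of_le (by positivity) (by linarith)⟩
    · exact ⟨one_div_le_one_div_of_le (by linarith) (by linarith),
        one_div_le_one_div_of_le (by positivity) (by linarith)⟩
  · rw [← intervalIntegral.integral_add_adjacent_intervals left right,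
      integral_twoStep_left hm0, integral_twoStep_right hm1]
    norm_num

end twoStep

open Classical in
noncomputable def lieCount (l mid : ℝ) (K : ℕ) : (t : ℕ) → (Fin t → ℝ) → ℕ
  | 0, _ => 0
  | t + 1, x =>
      if lieCount l mid K t (Fin.init x) < K ∧ l ≤ x (Fin.last t) ∧ x (Fin.last t) < mid
      then lieCount l mid K t (Fin.init x) + 1
      else lieCount l mid K t (Fin.init x)

lemma lieCount_le (l mid : ℝ) (K : ℕ) : ∀ (t : ℕ) (x : Fin t → ℝ), lieCount l mid K t x ≤ K
  | 0, _ => Nat.zero_le K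
  | t + 1, x => by
    have := lieCount_le l mid K t (Fin.init x)
    rw [lieCount]
    split <;> omega

open Classical in
noncomputable def budgetedLiar (l mid : ℝ) (K : ℕ) : BobStrategy := fun t x _ =>
  if lieCount l mid K t (Fin.init x) < K ∧ l ≤ x (Fin.last t) ∧ x (Fin.last t) < mid then Choice.L
  else if mid ≤ x (Fin.last t) then Choice.L else Choice.R

noncomputable def lieCountAlong (l mid : ℝ) (K : ℕ) (a : ℕ → ℝ) (t : ℕ) : ℕ :=
  lieCount l mid K t fun i => a (i.1 + 1)

section lieCountAlong

variable {l mid : ℝ} {K : ℕ} {a : ℕ → ℝ}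

@[simp]
lemma lieCountAlong_zero : lieCountAlong l mid K a 0 = 0 := rfl

lemma lieCountAlong_le (t : ℕ) : lieCountAlong l mid K a t ≤ K := lieCount_le l mid K t _

open Classical in
lemma lieCountAlong_succ (t : ℕ) :
    lieCountAlong l mid K a (t + 1) =
      if lieCountAlong l mid K a t < K ∧ l ≤ a (t + 1) ∧ a (t + 1) < mid
      then lieCountAlong l mid K a t + 1 else lieCountAlong l mid K a t := rfl

lemma lieCountAlong_mono : Monotone (lieCountAlong l mid K a) :=
  monotone_nat_of_le_succ fun t => by rw [lieCountAlong_succ]; split <;> omega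

lemma BobConsistent.budgetedLiar_step {b : ℕ → Choice} {T τ : ℕ}
    (hb : BobConsistent (budgetedLiar l mid K) a b T) (hτ : τ < T) :
    (lieCountAlong l mid K a τ < K ∧ l ≤ a (τ + 1) ∧ a (τ + 1) < mid ∧ b (τ + 1) = Choice.L ∧
        lieCountAlong l mid K a (τ + 1) = lieCountAlong l mid K a τ + 1) ∨
      (mid ≤ a (τ + 1) ∧ b (τ + 1) = Choice.L ∧
        lieCountAlong l mid K a (τ + 1) = lieCountAlong l mid K a τ) ∨
      (a (τ + 1) < mid ∧ ¬(lieCountAlong l mid K a τ < K ∧ l ≤ a (τ + 1)) ∧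
        b (τ + 1) = Choice.R ∧ lieCountAlong l mid K a (τ + 1) = lieCountAlong l mid K a τ) := by
  have hbτ : b (τ + 1) = if lieCountAlong l mid K a τ < K ∧ l ≤ a (τ + 1) ∧ a (τ + 1) < mid
      then Choice.L else if mid ≤ a (τ + 1) then Choice.L else Choice.R := hb τ hτ
  rw [lieCountAlong_succ]
  by_cases hlie : lieCountAlong l mid K a τ < K ∧ l ≤ a (τ + 1) ∧ a (τ + 1) < mid
  · exact Or.inl ⟨hlie.1, hlie.2.1, hlie.2.2, by rw [hbτ, if_pos hlie], if_pos hlie⟩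
  by_cases hx : mid ≤ a (τ + 1)
  · exact Or.inr <| Or.inl ⟨hx, by rw [hbτ, if_neg hlie, if_pos hx], if_neg hlie⟩
  · exact Or.inr <| Or.inr ⟨not_le.1 hx, fun h => hlie ⟨h.1, h.2, not_le.1 hx⟩,
      by rw [hbτ, if_neg hlie, if_neg hx], if_neg hlie⟩

end lieCountAlong

section RegretBounds

variable {lo hi mB s : ℝ} {K : ℕ} {a : ℕ → ℝ} {b : ℕ → Choice} {T : ℕ}

lemma bobRoundRegret_budgetedLiar_le {vB : ℝ → ℝ} (hB : IsDensity lo hi vB) (hlo : 0 ≤ lo)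
    (hmB : cumul vB mB = 1 / 2) (hs : 0 ≤ s) (hmBs : 0 ≤ mB - s) (hmB1 : mB ≤ 1)
    (ha : ∀ t : ℕ, 1 ≤ t → t ≤ T → a t ∈ Set.Icc (0 : ℝ) 1)
    (hb : BobConsistent (budgetedLiar (mB - s) mB K) a b T) {τ : ℕ} (hτ : τ < T) :
    max (cumul vB (a (τ + 1))) (1 - cumul vB (a (τ + 1))) - uB vB a b (τ + 1) ≤
      ((lieCountAlong (mB - s) mB K a (τ + 1) : ℝ) - lieCountAlong (mB - s) mB K a τ) *
        (2 * hi * s) := by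
  obtain ⟨hx0, hx1⟩ := ha (τ + 1) (by omega) (by omega)
  rcases hb.budgetedLiar_step hτ with ⟨-, hlx, hxm, hbL, hc⟩ | ⟨hmx, hbL, hc⟩ | ⟨hxm, -, hbR, hc⟩
  · have hlow := hB.cumul_le_half hlo hmB hx0 hxm.le hmB1
    have hgap := hB.cumul_sub_le_mul_sub hx0 hxm.le hmB1
    have : hi * (mB - a (τ + 1)) ≤ hi * s :=
      mul_le_mul_of_nonneg_left (by linarith) (by linarith [hB.one_le_hi])
    rw [hc, uB, if_pos hbL, max_eq_right (by linarith)]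
    push_cast
    linarith
  · have := hB.half_le_cumul hlo hmB (by linarith) hmx hx1
    rw [hc, uB, if_pos hbL, max_eq_left (by linarith)]
    simp
  · have := hB.cumul_le_half hlo hmB hx0 hxm.le hmB1
    rw [hc, uB, hbR, if_neg (by decide), max_eq_right (by linarith)]
    simp

lemma bobRegret_budgetedLiar_le {vB : ℝ → ℝ} (hB : IsDensity lo hi vB) (hlo : 0 ≤ lo)
    (hmB : cumul vB mB = 1 / 2) (hs : 0 ≤ s) (hmBs : 0 ≤ mB - s) (hmB1 : mB ≤ 1)
    (ha : ∀ t : ℕ, 1 ≤ t → t ≤ T → a t ∈ Set.Icc (0 : ℝ) 1)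
    (hb : BobConsistent (budgetedLiar (mB - s) mB K) a b T) :
    bobRegret vB a b T ≤ K * (2 * hi * s) := by
  set c : ℕ → ℝ := fun t => lieCountAlong (mB - s) mB K a t
  calc bobRegret vB a b T
      = ∑ i ∈ Finset.range T,
          (max (cumul vB (a (i + 1))) (1 - cumul vB (a (i + 1))) - uB vB a b (i + 1)) :=
        sum_Icc_one_eq_sum_range _ T
    _ ≤ ∑ i ∈ Finset.range T, (c (i + 1) - c i) * (2 * hi * s) :=
        Finset.sum_le_sum fun i hmem =>
          bobRoundRegret_budgetedLiar_le hB hlo hmB hs hmBs hmB1 ha hb (Finset.mem_range.1 hmem)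
    _ = c T * (2 * hi * s) := by simp [c, ← Finset.sum_mul, Finset.sum_range_sub c]
    _ ≤ K * (2 * hi * s) := by
        have := hB.one_le_hi
        gcongr
        exact Nat.cast_le.2 (lieCountAlong_le T)

lemma aliceRoundRegret_budgetedLiar_ge {vA : ℝ → ℝ} {ε : ℝ} (hA : IsDensity lo hi vA) (hlo : 0 ≤ lo)
    (hs : 0 ≤ s) (hmBs : 0 ≤ mB - s) (hmB1 : mB ≤ 1) (hε : 1 / 2 + ε ≤ cumul vA mB)
    (hsε : hi * s ≤ ε) (ha : ∀ t : ℕ, 1 ≤ t → t ≤ T → a t ∈ Set.Icc (0 : ℝ) 1)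
    (hb : BobConsistent (budgetedLiar (mB - s) mB K) a b T) {τ : ℕ} (hτ : τ < T) :
    ((lieCountAlong (mB - s) mB K a (τ + 1) : ℝ) - lieCountAlong (mB - s) mB K a τ) * ε ≤
        stackValue vA mB - uA vA a b (τ + 1) ∧
      (lieCountAlong (mB - s) mB K a τ < K → lo * s ≤ stackValue vA mB - uA vA a b (τ + 1)) := by
  obtain ⟨hx0, hx1⟩ := ha (τ + 1) (by omega) (by omega)
  have hlo_s : lo * s ≤ ε := (mul_le_mul_of_nonneg_right hA.lo_le_hi hs).trans hsε
  have hε0 : 0 ≤ ε := (mul_nonneg (by linarith [hA.one_le_hi]) hs).trans hsε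
  have hstack : stackValue vA mB = cumul vA mB := max_eq_left (by linarith)
  rw [hstack]
  rcases hb.budgetedLiar_step hτ with
    ⟨-, hlx, hxm, hbL, hc⟩ | ⟨hmx, hbL, hc⟩ | ⟨hxm, hnlie, hbR, hc⟩
  · have hgap := hA.cumul_sub_le_mul_sub hx0 hxm.le hmB1
    have : hi * (mB - a (τ + 1)) ≤ hi * s :=
      mul_le_mul_of_nonneg_left (by linarith) (by linarith [hA.one_le_hi])
    rw [hc, uA, if_pos hbL]
    push_cast
    constructor <;> intros <;> linarith
  · have := hA.mul_sub_le_cumul_sub (by linarith) hmx hx1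
    have := mul_nonneg hlo (sub_nonneg.2 hmx)
    rw [hc, uA, if_pos hbL]
    constructor <;> intros <;> linarith
  · have hgap := hA.mul_sub_le_cumul_sub hx0 hxm.le hmB1
    have := mul_nonneg hlo (sub_nonneg.2 hxm.le)
    rw [hc, uA, hbR, if_neg (by decide)]
    refine ⟨by linarith, fun hK => ?_⟩
    have hxs : s ≤ mB - a (τ + 1) := by
      have := not_and.1 hnlie hK
      linarith
    linarith [mul_le_mul_of_nonneg_left hxs hlo]

lemma aliceRegret_budgetedLiar_ge {vA : ℝ → ℝ} {ε : ℝ} (hA : IsDensity lo hi vA) (hlo : 0 ≤ lo)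
    (hs : 0 ≤ s) (hmBs : 0 ≤ mB - s) (hmB1 : mB ≤ 1) (hε : 1 / 2 + ε ≤ cumul vA mB)
    (hsε : hi * s ≤ ε) (ha : ∀ t : ℕ, 1 ≤ t → t ≤ T → a t ∈ Set.Icc (0 : ℝ) 1)
    (hb : BobConsistent (budgetedLiar (mB - s) mB K) a b T) :
    min (T * (lo * s)) (K * ε) ≤ aliceRegret vA mB a b T := by
  set c : ℕ → ℕ := lieCountAlong (mB - s) mB K a
  have hround := fun i (hmem : i ∈ Finset.range T) =>
    aliceRoundRegret_budgetedLiar_ge hA hlo hs hmBs hmB1 hε hsε ha hb (Finset.mem_range.1 hmem)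
  rw [aliceRegret, sum_Icc_one_eq_sum_range]
  rcases (lieCountAlong_le T).lt_or_eq with hlt | heq
  · calc min (T * (lo * s)) (K * ε) ≤ ∑ _i ∈ Finset.range T, lo * s := by simp
      _ ≤ ∑ i ∈ Finset.range T, (stackValue vA mB - uA vA a b (i + 1)) :=
        Finset.sum_le_sum fun i hmem =>
          (hround i hmem).2 ((lieCountAlong_mono (Finset.mem_range.1 hmem).le).trans_lt hlt)
  · calc min (T * (lo * s)) (K * ε) ≤ ((c T : ℝ) - c 0) * ε := by simp [c, heq]
      _ = ∑ i ∈ Finset.range T, ((c (i + 1) : ℝ) - c i) * ε := by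
        rw [← Finset.sum_mul, Finset.sum_range_sub fun i => (c i : ℝ)]
      _ ≤ ∑ i ∈ Finset.range T, (stackValue vA mB - uA vA a b (i + 1)) :=
        Finset.sum_le_sum fun i hmem => (hround i hmem).1

end RegretBounds

lemma rpow_half_sub_one_le_one {x α : ℝ} (hx : 1 ≤ x) (hα : α ≤ 1) : x ^ ((α - 1) / 2) ≤ 1 :=
  Real.rpow_le_one_of_one_le_of_nonpos hx (by linarith)

lemma natCeil_rpow_mul_rpow_le {x α : ℝ} (hx : 1 ≤ x) (hα : 0 ≤ α) :
    (⌈x ^ ((α + 1) / 2)⌉₊ : ℝ) * x ^ ((α - 1) / 2) ≤ 2 * x ^ α := by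
  have hy : 1 ≤ x ^ ((α + 1) / 2) := Real.one_le_rpow hx (by linarith)
  calc (⌈x ^ ((α + 1) / 2)⌉₊ : ℝ) * x ^ ((α - 1) / 2)
      ≤ 2 * x ^ ((α + 1) / 2) * x ^ ((α - 1) / 2) := by
        gcongr
        linarith [Nat.ceil_lt_add_one (zero_le_one.trans hy)]
    _ = 2 * x ^ α := by
        rw [mul_assoc, ← Real.rpow_add (by linarith)]
        ring_nf

lemma mul_rpow_half_sub_one {x : ℝ} (hx : 0 < x) (α : ℝ) :
    x * x ^ ((α - 1) / 2) = x ^ ((α + 1) / 2) := by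
  rw [mul_comm, ← Real.rpow_add_one hx.ne']
  ring_nf

noncomputable def scheduledLiar (mid g α : ℝ) (T : ℕ) : BobStrategy :=
  budgetedLiar (mid - g * (T : ℝ) ^ ((α - 1) / 2)) mid ⌈(T : ℝ) ^ ((α + 1) / 2)⌉₊

section scheduledLiar

variable {lo hi mid g α : ℝ} {a : ℕ → ℝ} {b : ℕ → Choice} {T : ℕ}

lemma bobRegret_scheduledLiar_le {vB : ℝ → ℝ} (hB : IsDensity lo hi vB) (hlo : 0 ≤ lo)
    (hmid : cumul vB mid = 1 / 2) (hg : 0 < g) (hgmid : g ≤ mid) (hmid1 : mid ≤ 1)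
    (hα0 : 0 ≤ α) (hα1 : α ≤ 1) (hT : 1 ≤ T)
    (ha : ∀ t : ℕ, 1 ≤ t → t ≤ T → a t ∈ Set.Icc (0 : ℝ) 1)
    (hb : BobConsistent (scheduledLiar mid g α T) a b T) :
    bobRegret vB a b T ≤ 4 * hi * g * (T : ℝ) ^ α := by
  have hT : (1 : ℝ) ≤ T := by exact_mod_cast hT
  have hsg : g * (T : ℝ) ^ ((α - 1) / 2) ≤ g :=
    mul_le_of_le_one_right hg.le (rpow_half_sub_one_le_one hT hα1)
  have hhi := hB.one_le_hi
  calc bobRegret vB a b T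
      ≤ ⌈(T : ℝ) ^ ((α + 1) / 2)⌉₊ * (2 * hi * (g * (T : ℝ) ^ ((α - 1) / 2))) :=
        bobRegret_budgetedLiar_le hB hlo hmid (by positivity) (by linarith) hmid1 ha hb
    _ = 2 * hi * g * (⌈(T : ℝ) ^ ((α + 1) / 2)⌉₊ * (T : ℝ) ^ ((α - 1) / 2)) := by ring
    _ ≤ 2 * hi * g * (2 * (T : ℝ) ^ α) :=
        mul_le_mul_of_nonneg_left (natCeil_rpow_mul_rpow_le hT hα0) (by positivity)
    _ = 4 * hi * g * (T : ℝ) ^ α := by ring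

lemma aliceRegret_scheduledLiar_ge {vA : ℝ → ℝ} (hA : IsDensity lo hi vA) (hlo : 0 ≤ lo)
    (hg : 0 < g) (hgmid : g ≤ mid) (hmid1 : mid ≤ 1) (hgap : 1 / 2 + hi * g ≤ cumul vA mid)
    (hα1 : α ≤ 1) (hT : 1 ≤ T) (ha : ∀ t : ℕ, 1 ≤ t → t ≤ T → a t ∈ Set.Icc (0 : ℝ) 1)
    (hb : BobConsistent (scheduledLiar mid g α T) a b T) :
    min (lo * g) (hi * g) * (T : ℝ) ^ ((α + 1) / 2) ≤ aliceRegret vA mid a b T := by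
  have hT : (1 : ℝ) ≤ T := by exact_mod_cast hT
  set s := g * (T : ℝ) ^ ((α - 1) / 2)
  have hsg : s ≤ g := mul_le_of_le_one_right hg.le (rpow_half_sub_one_le_one hT hα1)
  have hhi := hA.one_le_hi
  calc min (lo * g) (hi * g) * (T : ℝ) ^ ((α + 1) / 2)
      = min (T * (lo * s)) ((T : ℝ) ^ ((α + 1) / 2) * (hi * g)) := by
        rw [min_mul_of_nonneg _ _ (by positivity), ← mul_rpow_half_sub_one (by linarith) α]
        congr 1 <;> ring
    _ ≤ min (T * (lo * s)) (⌈(T : ℝ) ^ ((α + 1) / 2)⌉₊ * (hi * g)) := by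
        gcongr
        exact Nat.le_ceil _
    _ ≤ aliceRegret vA mid a b T :=
        aliceRegret_budgetedLiar_ge hA hlo (by positivity) (by linarith) hmid1 hgap
          (by gcongr) ha hb

end scheduledLiar

theorem bounded_regret_bob_alice_lower_bound_general
    (δ Δ : ℝ) (hδ : 0 < δ)
    (α : ℝ) (hα0 : 0 ≤ α) (hα1 : α < 1)
    (vA : ℝ → ℝ) (hA : IsDensity δ Δ vA) :
    ∃ (vB : ℝ → ℝ) (δ' Δ' : ℝ), 0 < δ' ∧ δ' ≤ Δ' ∧ IsDensity δ' Δ' vB ∧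
    ∃ (c C : ℝ), 0 < c ∧ 0 < C ∧
    ∃ (T₀ : ℕ) (SB : ℕ → BobStrategy),
      ∀ T : ℕ, T₀ ≤ T →
        (∀ (a : ℕ → ℝ) (b : ℕ → Choice),
            (∀ t : ℕ, 1 ≤ t → t ≤ T → a t ∈ Set.Icc (0:ℝ) 1) →
            BobConsistent (SB T) a b T →
            bobRegret vB a b T ≤ C * (T : ℝ) ^ α) ∧
        (∀ SA : AliceStrategy, ∀ (a : ℕ → ℝ) (b : ℕ → Choice),
            (∀ t : ℕ, 1 ≤ t → t ≤ T → a t ∈ Set.Icc (0:ℝ) 1) →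
            AliceConsistent SA a b T → BobConsistent (SB T) a b T →
            ∀ mB : ℝ, mB ∈ Set.Icc (0:ℝ) 1 → cumul vB mB = 1/2 →
            c * (T : ℝ) ^ ((α + 1) / 2) ≤ aliceRegret vA mB a b T) := by
  have hΔ := hA.one_le_hi
  set g := 1 / (4 * Δ)
  have hg : 0 < g := by positivity
  have hΔg : Δ * g = 1 / 4 := by simp only [g]; field_simp
  have hg4 : g ≤ 1 / 4 := by nlinarith
  have hvB : IsDensity (1 / 2) (1 / (2 * g)) (twoStep (1 - g)) :=
    isDensity_twoStep hg (by linarith) (by simp)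
  have hmid : cumul (twoStep (1 - g)) (1 - g) = 1 / 2 := cumul_twoStep_self (by linarith)
  have hgap : 1 / 2 + Δ * g ≤ cumul vA (1 - g) := by
    linarith [hA.one_sub_mul_le_cumul_one_sub hg.le (by linarith)]
  refine ⟨twoStep (1 - g), 1 / 2, 1 / (2 * g), by norm_num, hvB.lo_le_hi, hvB,
    min (δ * g) (Δ * g), 4 * (1 / (2 * g)) * g, by positivity, by positivity, 1,
    scheduledLiar (1 - g) g α, fun T hT =>
      ⟨fun a b ha hb => ?_, fun _ a b ha _ hb m hm hm_half => ?_⟩⟩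
  · exact bobRegret_scheduledLiar_le hvB (by norm_num) hmid hg (by linarith) (by linarith) hα0
      hα1.le hT ha hb
  · rw [hvB.eq_of_cumul_eq (by norm_num) hm ⟨by linarith, by linarith⟩ (hm_half.trans hmid.symm)]
    exact aliceRegret_scheduledLiar_ge hA hδ.le hg (by linarith) (by linarith) hgap hα1.le hT ha hb

/-- For any `α ∈ [0,1)` and any Alice density `v_A`, there are a Bob density
`ṽ_B` (bounded above and below by positive constants) and Bob strategies `S̃_B` with regret
`O(T^α)`, against which every Alice strategy suffers Stackelberg regret `Ω(T^{(α+1)/2})`. -/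
theorem bounded_regret_bob_alice_lower_bound
    (δ Δ : ℝ) (hδ : 0 < δ) (hδΔ : δ ≤ Δ)
    (α : ℝ) (hα0 : 0 ≤ α) (hα1 : α < 1)
    (vA : ℝ → ℝ) (hA : IsDensity δ Δ vA) :
    ∃ (vB : ℝ → ℝ) (δ' Δ' : ℝ), 0 < δ' ∧ δ' ≤ Δ' ∧ IsDensity δ' Δ' vB ∧
    ∃ (c C : ℝ), 0 < c ∧ 0 < C ∧
    ∃ (T₀ : ℕ) (SB : ℕ → BobStrategy),
      ∀ T : ℕ, T₀ ≤ T →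
        (∀ (a : ℕ → ℝ) (b : ℕ → Choice),
            (∀ t : ℕ, 1 ≤ t → t ≤ T → a t ∈ Set.Icc (0:ℝ) 1) →
            BobConsistent (SB T) a b T →
            bobRegret vB a b T ≤ C * (T : ℝ) ^ α) ∧
        (∀ SA : AliceStrategy, ∀ (a : ℕ → ℝ) (b : ℕ → Choice),
            (∀ t : ℕ, 1 ≤ t → t ≤ T → a t ∈ Set.Icc (0:ℝ) 1) →
            AliceConsistent SA a b T → BobConsistent (SB T) a b T →
            ∀ mB : ℝ, mB ∈ Set.Icc (0:ℝ) 1 → cumul vB mB = 1/2 →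
            c * (T : ℝ) ^ ((α + 1) / 2) ≤ aliceRegret vA mB a b T) :=
  bounded_regret_bob_alice_lower_bound_general δ Δ hδ α hα0 hα1 vA hA
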